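/- Consider the two-level star graph with n1 = f·kt leaves at distance 1 and n2 = f·kd leaves at distance α from the center, for positive integers f, kt, kd and real α > 0. The optimal makespan of covering all leaves with kt trucks (speed 1) and kd drones (speed α), each performing a closed tour from v0, equals 2f. -/

import Mathlib

/-- The `i`-th block of `f` consecutive elements of `Fin (f*k)`. -/
def starBlock (f k : ℕ) (i : Fin k) : Finset (Fin (f * k)) :=
  Finset.univ.map ⟨fun r : Fin f => ⟨i.val * f + r.val, by
      have h1 : i.val + 1 ≤ k := i.isLt
      have h2 : (i.val + 1) * f ≤ k * f := Nat.mul_le_mul_right f h1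
      have h3 : i.val * f + r.val < (i.val + 1) * f := by
        have := r.isLt; rw [Nat.succ_mul]; omega
      have h4 : f * k = k * f := Nat.mul_comm f k
      omega⟩,
    by
      intro r s h
      have := congrArg Fin.val h
      simp only at this
      exact Fin.ext (by omega)⟩

lemma starBlock_card (f k : ℕ) (i : Fin k) : (starBlock f k i).card = f := by
  simp [starBlock]

lemma mem_starBlock (f k : ℕ) (hf : 0 < f) (hk : 0 < k) (v : Fin (f * k)) :
    ∃ i, v ∈ starBlock f k i := by
  have hv : v.val / f < k := by
    have := v.isLt
    exact Nat.div_lt_of_lt_mul (by omega)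
  refine ⟨⟨v.val / f, hv⟩, ?_⟩
  simp only [starBlock, Finset.mem_map, Finset.mem_univ, true_and]
  refine ⟨⟨v.val % f, Nat.mod_lt _ hf⟩, ?_⟩
  apply Fin.ext
  show v.val / f * f + v.val % f = v.val
  rw [Nat.mul_comm]
  exact Nat.div_add_mod v.val f

/-- On the two-level star with f·kt level-1 leaves at distance 1 and f·kd
level-2 leaves at distance α, the optimal makespan with kt trucks and kd drones
equals 2f. A truck visiting a level-1 and b level-2 leaves takes time 2a + 2αb;
a drone takes (2/α)a + 2b. -/
theorem stmt7 (f kt kd : ℕ) (hf : 0 < f) (hkt : 0 < kt) (hkd : 0 < kd)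
    (α : ℝ) (hα : 0 < α) :
    IsLeast {M : ℝ | ∃ (A : Fin kt → Finset (Fin (f * kt)))
        (B : Fin kt → Finset (Fin (f * kd)))
        (Cc : Fin kd → Finset (Fin (f * kt)))
        (Dd : Fin kd → Finset (Fin (f * kd))),
        (∀ v, (∃ i, v ∈ A i) ∨ (∃ j, v ∈ Cc j)) ∧
        (∀ w, (∃ i, w ∈ B i) ∨ (∃ j, w ∈ Dd j)) ∧
        M = max
          (Finset.univ.sup' ⟨⟨0, hkt⟩, Finset.mem_univ _⟩
            (fun i => 2 * ((A i).card : ℝ) + 2 * α * ((B i).card : ℝ)))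
          (Finset.univ.sup' ⟨⟨0, hkd⟩, Finset.mem_univ _⟩
            (fun j => (2 / α) * ((Cc j).card : ℝ) + 2 * ((Dd j).card : ℝ)))}
      (2 * f) := by
  constructor
  · -- membership: trucks take the level-1 blocks, drones the level-2 blocks
    refine ⟨starBlock f kt, fun _ => ∅, fun _ => ∅, starBlock f kd, ?_, ?_, ?_⟩
    · intro v; exact Or.inl (mem_starBlock f kt hf hkt v)
    · intro w; exact Or.inr (mem_starBlock f kd hf hkd w)
    · have h1 : (Finset.univ.sup' ⟨⟨0, hkt⟩, Finset.mem_univ _⟩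
          (fun i => 2 * ((starBlock f kt i).card : ℝ)
            + 2 * α * (((∅ : Finset (Fin (f * kd))).card : ℝ)))) = 2 * f := by
        apply le_antisymm
        · apply Finset.sup'_le; intro i _; simp [starBlock_card]
        · refine le_trans ?_ (Finset.le_sup' _ (Finset.mem_univ (⟨0, hkt⟩ : Fin kt)))
          simp [starBlock_card]
      have h2 : (Finset.univ.sup' ⟨⟨0, hkd⟩, Finset.mem_univ _⟩
          (fun j => (2 / α) * (((∅ : Finset (Fin (f * kt))).card : ℝ))
            + 2 * ((starBlock f kd j).card : ℝ))) = 2 * f := by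
        apply le_antisymm
        · apply Finset.sup'_le; intro j _; simp [starBlock_card]
        · refine le_trans ?_ (Finset.le_sup' _ (Finset.mem_univ (⟨0, hkd⟩ : Fin kd)))
          simp [starBlock_card]
      rw [h1, h2, max_self]
  · -- lower bound
    rintro M ⟨A, B, Cc, Dd, hcov1, hcov2, rfl⟩
    set M := max
          (Finset.univ.sup' ⟨⟨0, hkt⟩, Finset.mem_univ _⟩
            (fun i => 2 * ((A i).card : ℝ) + 2 * α * ((B i).card : ℝ)))
          (Finset.univ.sup' ⟨⟨0, hkd⟩, Finset.mem_univ _⟩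
            (fun j => (2 / α) * ((Cc j).card : ℝ) + 2 * ((Dd j).card : ℝ))) with hM
    have hTruck : ∀ i, 2 * ((A i).card : ℝ) + 2 * α * ((B i).card : ℝ) ≤ M :=
      fun i => le_trans
        (Finset.le_sup' (fun i => 2 * ((A i).card : ℝ) + 2 * α * ((B i).card : ℝ))
          (Finset.mem_univ i)) (le_max_left _ _)
    have hDrone : ∀ j, (2 / α) * ((Cc j).card : ℝ) + 2 * ((Dd j).card : ℝ) ≤ M :=
      fun j => le_trans
        (Finset.le_sup' (fun j => (2 / α) * ((Cc j).card : ℝ) + 2 * ((Dd j).card : ℝ))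
          (Finset.mem_univ j)) (le_max_right _ _)
    -- counting level-1 leaves
    have h1 : (f * kt : ℕ) ≤ ∑ i, (A i).card + ∑ j, (Cc j).card := by
      have hsub : (Finset.univ : Finset (Fin (f * kt))) ⊆
          Finset.univ.biUnion A ∪ Finset.univ.biUnion Cc := by
        intro v _
        rcases hcov1 v with ⟨i, hi⟩ | ⟨j, hj⟩
        · exact Finset.mem_union_left _ (Finset.mem_biUnion.mpr ⟨i, Finset.mem_univ i, hi⟩)
        · exact Finset.mem_union_right _ (Finset.mem_biUnion.mpr ⟨j, Finset.mem_univ j, hj⟩)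
      calc (f * kt : ℕ) = (Finset.univ : Finset (Fin (f * kt))).card := by simp
        _ ≤ (Finset.univ.biUnion A ∪ Finset.univ.biUnion Cc).card :=
            Finset.card_le_card hsub
        _ ≤ (Finset.univ.biUnion A).card + (Finset.univ.biUnion Cc).card :=
            Finset.card_union_le _ _
        _ ≤ ∑ i, (A i).card + ∑ j, (Cc j).card :=
            Nat.add_le_add (Finset.card_biUnion_le) (Finset.card_biUnion_le)
    have h2 : (f * kd : ℕ) ≤ ∑ i, (B i).card + ∑ j, (Dd j).card := by
      have hsub : (Finset.univ : Finset (Fin (f * kd))) ⊆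
          Finset.univ.biUnion B ∪ Finset.univ.biUnion Dd := by
        intro w _
        rcases hcov2 w with ⟨i, hi⟩ | ⟨j, hj⟩
        · exact Finset.mem_union_left _ (Finset.mem_biUnion.mpr ⟨i, Finset.mem_univ i, hi⟩)
        · exact Finset.mem_union_right _ (Finset.mem_biUnion.mpr ⟨j, Finset.mem_univ j, hj⟩)
      calc (f * kd : ℕ) = (Finset.univ : Finset (Fin (f * kd))).card := by simp
        _ ≤ (Finset.univ.biUnion B ∪ Finset.univ.biUnion Dd).card :=
            Finset.card_le_card hsub
        _ ≤ (Finset.univ.biUnion B).card + (Finset.univ.biUnion Dd).card :=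
            Finset.card_union_le _ _
        _ ≤ ∑ i, (B i).card + ∑ j, (Dd j).card :=
            Nat.add_le_add (Finset.card_biUnion_le) (Finset.card_biUnion_le)
    -- sum the per-vehicle bounds
    have hsumT : ∑ i : Fin kt, (2 * ((A i).card : ℝ) + 2 * α * ((B i).card : ℝ))
        ≤ (kt : ℝ) * M := by
      calc ∑ i : Fin kt, (2 * ((A i).card : ℝ) + 2 * α * ((B i).card : ℝ))
          ≤ ∑ _i : Fin kt, M := Finset.sum_le_sum (fun i _ => hTruck i)
        _ = (kt : ℝ) * M := by simp [mul_comm]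
    have hsumD : ∑ j : Fin kd, ((2 / α) * ((Cc j).card : ℝ) + 2 * ((Dd j).card : ℝ))
        ≤ (kd : ℝ) * M := by
      calc ∑ j : Fin kd, ((2 / α) * ((Cc j).card : ℝ) + 2 * ((Dd j).card : ℝ))
          ≤ ∑ _j : Fin kd, M := Finset.sum_le_sum (fun j _ => hDrone j)
        _ = (kd : ℝ) * M := by simp [mul_comm]
    have hT' : 2 * (∑ i, ((A i).card : ℝ)) + 2 * α * (∑ i, ((B i).card : ℝ))
        ≤ (kt : ℝ) * M := by
      have := hsumT
      rw [Finset.sum_add_distrib, ← Finset.mul_sum, ← Finset.mul_sum] at this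
      exact this
    have hD' : (2 / α) * (∑ j, ((Cc j).card : ℝ)) + 2 * (∑ j, ((Dd j).card : ℝ))
        ≤ (kd : ℝ) * M := by
      have := hsumD
      rw [Finset.sum_add_distrib, ← Finset.mul_sum, ← Finset.mul_sum] at this
      exact this
    have h1' : (f : ℝ) * kt ≤ (∑ i, ((A i).card : ℝ)) + (∑ j, ((Cc j).card : ℝ)) := by
      exact_mod_cast h1
    have h2' : (f : ℝ) * kd ≤ (∑ i, ((B i).card : ℝ)) + (∑ j, ((Dd j).card : ℝ)) := by
      exact_mod_cast h2
    -- combine: 2f(kt + α kd) ≤ M(kt + α kd)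
    have hne : α ≠ 0 := ne_of_gt hα
    have hαD : 2 * (∑ j, ((Cc j).card : ℝ)) + 2 * α * (∑ j, ((Dd j).card : ℝ))
        ≤ α * ((kd : ℝ) * M) := by
      have := mul_le_mul_of_nonneg_left hD' (le_of_lt hα)
      calc 2 * (∑ j, ((Cc j).card : ℝ)) + 2 * α * (∑ j, ((Dd j).card : ℝ))
          = α * ((2 / α) * (∑ j, ((Cc j).card : ℝ)) + 2 * (∑ j, ((Dd j).card : ℝ))) := by
            have h2a : α * (2 / α) = 2 := by field_simp
            rw [mul_add, ← mul_assoc, h2a]; ring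
        _ ≤ α * ((kd : ℝ) * M) := this
    have hkt' : (0 : ℝ) < kt := by exact_mod_cast hkt
    have hkd' : (0 : ℝ) < kd := by exact_mod_cast hkd
    have hkey : 2 * (f : ℝ) * ((kt : ℝ) + α * kd) ≤ M * ((kt : ℝ) + α * kd) := by
      have hB0 : (0 : ℝ) ≤ ∑ i, ((B i).card : ℝ) :=
        Finset.sum_nonneg (fun i _ => Nat.cast_nonneg _)
      have hC0 : (0 : ℝ) ≤ ∑ j, ((Cc j).card : ℝ) :=
        Finset.sum_nonneg (fun j _ => Nat.cast_nonneg _)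
      nlinarith [hT', hαD, h1', h2', mul_le_mul_of_nonneg_left h2' (le_of_lt hα)]
    have hpos : (0 : ℝ) < (kt : ℝ) + α * kd := by positivity
    exact le_of_mul_le_mul_right hkey hpos
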